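/- For all z, w ∈ ℍ with |w| ≥ 2|z|, one has 0 ≤ log(|z − w̄| / |z − w|) ≤ 4 · |z| / |w|, where w̄ denotes the complex conjugate of w. -/

import Mathlib

open ComplexConjugate

/-!
Points on the same side of the real axis are closer to each other than to each other's reflections,
so the ratio `‖z - w̄‖ / ‖z - w‖` is at least `1`. The triangle inequality bounds it above by
`(|z| + |w|) / (|w| - |z|) = 1 + 2|z| / (|w| - |z|)`, and `log x ≤ x - 1` together with
`|w| - |z| ≥ |w| / 2` gives the bound `4|z| / |w|`.
-/

theorem add_div_sub_sub_one_le {a b : ℝ} (ha : 0 ≤ a) (hb : 0 < b) (h : 2 * a ≤ b) :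
    (a + b) / (b - a) - 1 ≤ 4 * a / b := by
  rw [div_sub_one (by linarith), div_le_div_iff₀ (by linarith) hb]
  nlinarith

namespace Complex

noncomputable def upperHalfPlaneGreen (z w : ℂ) : ℝ :=
  Real.log (‖z - conj w‖ / ‖z - w‖)

theorem norm_sub_le_norm_sub_conj {z w : ℂ} (h : 0 ≤ z.im * w.im) :
    ‖z - w‖ ≤ ‖z - conj w‖ := by
  rw [norm_def, norm_def]
  apply Real.sqrt_le_sqrt
  simp only [normSq_apply, sub_re, sub_im, conj_re, conj_im]
  nlinarith

theorem norm_sub_conj_div_norm_sub_le {z w : ℂ} (hzw : ‖z‖ < ‖w‖) :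
    ‖z - conj w‖ / ‖z - w‖ ≤ (‖z‖ + ‖w‖) / (‖w‖ - ‖z‖) := by
  refine div_le_div₀ (by positivity) ?_ (sub_pos.mpr hzw) ?_
  · simpa only [norm_conj] using norm_sub_le z (conj w)
  · simpa only [norm_sub_rev w z] using norm_sub_norm_le w z

theorem upperHalfPlaneGreen_nonneg {z w : ℂ} (h : 0 ≤ z.im * w.im) :
    0 ≤ upperHalfPlaneGreen z w := by
  rcases eq_or_ne z w with rfl | hne
  · simp [upperHalfPlaneGreen]
  · exact Real.log_nonneg <|
      (one_le_div (norm_pos_iff.mpr (sub_ne_zero.mpr hne))).mpr (norm_sub_le_norm_sub_conj h)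

theorem upperHalfPlaneGreen_le {z w : ℂ} (hw : w ≠ 0) (h : 2 * ‖z‖ ≤ ‖w‖) :
    upperHalfPlaneGreen z w ≤ 4 * ‖z‖ / ‖w‖ := by
  have hw₀ : 0 < ‖w‖ := norm_pos_iff.mpr hw
  have hzw : ‖z‖ < ‖w‖ := by linarith [norm_nonneg z]
  have hsub : 0 < ‖z - w‖ :=
    norm_pos_iff.mpr (sub_ne_zero.mpr (ne_of_apply_ne norm hzw.ne))
  have hsub_conj : 0 < ‖z - conj w‖ :=
    norm_pos_iff.mpr (sub_ne_zero.mpr (ne_of_apply_ne norm (by rw [norm_conj]; exact hzw.ne)))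
  calc upperHalfPlaneGreen z w ≤ ‖z - conj w‖ / ‖z - w‖ - 1 :=
        Real.log_le_sub_one_of_pos (div_pos hsub_conj hsub)
    _ ≤ (‖z‖ + ‖w‖) / (‖w‖ - ‖z‖) - 1 := sub_le_sub_right (norm_sub_conj_div_norm_sub_le hzw) 1
    _ ≤ 4 * ‖z‖ / ‖w‖ := add_div_sub_sub_one_le (norm_nonneg z) hw₀ h

end Complex

open Complex in
theorem green_bound_large_modulus (z w : ℂ) (hz : 0 < z.im) (hw : 0 < w.im)
    (h : 2 * ‖z‖ ≤ ‖w‖) :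
    0 ≤ Real.log (‖z - conj w‖ / ‖z - w‖) ∧
      Real.log (‖z - conj w‖ / ‖z - w‖) ≤
        4 * ‖z‖ / ‖w‖ :=
  ⟨upperHalfPlaneGreen_nonneg (mul_pos hz hw).le,
    upperHalfPlaneGreen_le (fun hw₀ => by simp [hw₀] at hw) h⟩
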